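/- arXiv:2310.20310 — 2 statements merged into one kernel-verified Lean document; each statement's English description precedes it below -/
import Mathlib

section
/- (Discrete Gronwall inequality) Let δ ≥ 0, g₀ ≥ 0, and let (aₙ), (bₙ), (cₙ), (γₙ) be sequences of nonnegative real numbers such that for all N ≥ 0, a_N + δ·∑_{n=0}^N bₙ ≤ δ·∑_{n=0}^N (γₙ aₙ + cₙ) + g₀. Assume γₙ δ < 1 for all n and set σₙ := (1 - γₙ δ)⁻¹. Then for all N ≥ 0, a_N + δ·∑_{n=0}^N bₙ ≤ (δ·∑_{n=0}^N cₙ + g₀) · exp(δ·∑_{n=0}^N σₙ γₙ). -/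
/-!
Writing `Tₙ = ∑_{k<n} βₖ xₖ`, the implicit hypothesis `x_N ≤ K_N + T_N + β_N x_N` with `β_N < 1`
gives `x_N ≤ (1 - β_N)⁻¹ (K_N + T_N)`, hence `K_N + T_{N+1} ≤ (1 + σ_N β_N)(K_N + T_N)` with
`σ_N = (1 - β_N)⁻¹`. So `u_N = K_N + T_N` satisfies the explicit recursion
`u_{N+1} ≤ (1 + σ_N β_N) u_N + (K_{N+1} - K_N)`, and the classical discrete Grönwall inequality
bounds it by `K_N exp (∑_{n<N} σₙ βₙ)`; one more step of the recursion gives the bound on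
`K_N + T_{N+1}`. The theorem is the case `xₙ = aₙ`, `βₙ = γₙ δ`, `K_N = δ ∑_{n≤N} cₙ + g₀`.
-/

namespace Gronwall

open Finset Real

theorem le_inv_one_sub_mul_of_le_add_mul {x y β : ℝ} (hβ : β < 1) (h : x ≤ y + β * x) :
    x ≤ (1 - β)⁻¹ * y := by
  rw [le_inv_mul_iff₀ (sub_pos.2 hβ)]
  linarith

section Implicit

variable {β x K : ℕ → ℝ}

theorem add_sum_range_succ_le_of_le_add_sum {N : ℕ} (hβ₀ : 0 ≤ β N) (hβ₁ : β N < 1)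
    (hx : x N ≤ K N + ∑ n ∈ range (N + 1), β n * x n) :
    K N + ∑ n ∈ range (N + 1), β n * x n ≤
      (1 + (1 - β N)⁻¹ * β N) * (K N + ∑ n ∈ range N, β n * x n) := by
  rw [sum_range_succ] at hx ⊢
  have hxN : x N ≤ (1 - β N)⁻¹ * (K N + ∑ n ∈ range N, β n * x n) :=
    le_inv_one_sub_mul_of_le_add_mul hβ₁ (by linarith)
  calc K N + (∑ n ∈ range N, β n * x n + β N * x N)
      ≤ K N + (∑ n ∈ range N, β n * x n +
          β N * ((1 - β N)⁻¹ * (K N + ∑ n ∈ range N, β n * x n))) := by gcongr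
    _ = _ := by ring

theorem add_sum_range_succ_le_mul_exp_of_le_add_sum (hK₀ : 0 ≤ K 0) (hK : Monotone K)
    (hβ₀ : ∀ n, 0 ≤ β n) (hβ₁ : ∀ n, β n < 1)
    (hx : ∀ N, x N ≤ K N + ∑ n ∈ range (N + 1), β n * x n) (N : ℕ) :
    K N + ∑ n ∈ range (N + 1), β n * x n ≤
      K N * exp (∑ n ∈ range (N + 1), (1 - β n)⁻¹ * β n) := by
  set σβ : ℕ → ℝ := fun n ↦ (1 - β n)⁻¹ * β n
  have hσβ : ∀ n, 0 ≤ σβ n := fun n ↦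
    mul_nonneg (inv_nonneg.2 (sub_nonneg.2 (hβ₁ n).le)) (hβ₀ n)
  have step : ∀ n, K n + ∑ k ∈ range (n + 1), β k * x k ≤
      (1 + σβ n) * (K n + ∑ k ∈ range n, β k * x k) := fun n ↦
    add_sum_range_succ_le_of_le_add_sum (hβ₀ n) (hβ₁ n) (hx n)
  have explicit : K N + ∑ k ∈ range N, β k * x k ≤ K N * exp (∑ k ∈ range N, σβ k) := by
    have := _root_.discrete_gronwall (u := fun n ↦ K n + ∑ k ∈ range n, β k * x k)
      (b := fun n ↦ K (n + 1) - K n) (c := σβ) (n₀ := 0) (by simpa using hK₀)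
      (fun n _ ↦ by linarith [step n]) (fun n _ ↦ hσβ n)
      (fun n _ ↦ sub_nonneg.2 (hK n.le_succ)) (Nat.zero_le N)
    rwa [← range_eq_Ico, sum_range_sub (f := K), sum_range_zero, add_zero,
      add_sub_cancel] at this
  calc K N + ∑ n ∈ range (N + 1), β n * x n
      ≤ (1 + σβ N) * (K N + ∑ k ∈ range N, β k * x k) := step N
    _ ≤ (1 + σβ N) * (K N * exp (∑ k ∈ range N, σβ k)) := by
        gcongr
        linarith [hσβ N]
    _ ≤ exp (σβ N) * (K N * exp (∑ k ∈ range N, σβ k)) := by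
        have : 0 ≤ K N := hK₀.trans (hK N.zero_le)
        gcongr
        linarith [add_one_le_exp (σβ N)]
    _ = K N * exp (∑ n ∈ range (N + 1), σβ n) := by rw [sum_range_succ, exp_add]; ring

end Implicit

theorem discrete_gronwall_general
    (δ g₀ : ℝ) (hδ : 0 ≤ δ) (hg₀ : 0 ≤ g₀)
    (a b c γ : ℕ → ℝ)
    (hb : ∀ n, 0 ≤ b n) (hc : ∀ n, 0 ≤ c n)
    (hγ : ∀ n, 0 ≤ γ n)
    (hγδ : ∀ n, γ n * δ < 1)
    (h : ∀ N : ℕ, a N + δ * ∑ n ∈ Finset.range (N + 1), b n ≤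
        δ * ∑ n ∈ Finset.range (N + 1), (γ n * a n + c n) + g₀) :
    ∀ N : ℕ, a N + δ * ∑ n ∈ Finset.range (N + 1), b n ≤
      (δ * ∑ n ∈ Finset.range (N + 1), c n + g₀) *
        Real.exp (δ * ∑ n ∈ Finset.range (N + 1), (1 - γ n * δ)⁻¹ * γ n) := by
  set K : ℕ → ℝ := fun N ↦ δ * ∑ n ∈ range (N + 1), c n + g₀
  have hK : Monotone K := fun m n hmn ↦ by
    dsimp only [K]
    gcongr
    exact fun i _ _ ↦ hc i
  have hsplit : ∀ N, δ * ∑ n ∈ range (N + 1), (γ n * a n + c n) + g₀ =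
      K N + ∑ n ∈ range (N + 1), γ n * δ * a n := fun N ↦ by
    simp only [K, sum_add_distrib, mul_add, mul_sum]
    ring_nf
  have hx : ∀ N, a N ≤ K N + ∑ n ∈ range (N + 1), γ n * δ * a n := fun N ↦ by
    have : 0 ≤ δ * ∑ n ∈ range (N + 1), b n := mul_nonneg hδ (sum_nonneg fun n _ ↦ hb n)
    linarith [h N, hsplit N]
  have hσγ : ∀ N, δ * ∑ n ∈ range (N + 1), (1 - γ n * δ)⁻¹ * γ n =
      ∑ n ∈ range (N + 1), (1 - γ n * δ)⁻¹ * (γ n * δ) := fun N ↦ by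
    simp only [mul_sum]
    ring_nf
  intro N
  rw [hσγ]
  calc a N + δ * ∑ n ∈ range (N + 1), b n ≤ K N + ∑ n ∈ range (N + 1), γ n * δ * a n :=
        (h N).trans_eq (hsplit N)
    _ ≤ K N * exp (∑ n ∈ range (N + 1), (1 - γ n * δ)⁻¹ * (γ n * δ)) :=
        add_sum_range_succ_le_mul_exp_of_le_add_sum
          (add_nonneg (mul_nonneg hδ (sum_nonneg fun n _ ↦ hc n)) hg₀) hK
          (fun n ↦ mul_nonneg (hγ n) hδ) hγδ hx N

theorem discrete_gronwall
    (δ g₀ : ℝ) (hδ : 0 ≤ δ) (hg₀ : 0 ≤ g₀)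
    (a b c γ : ℕ → ℝ)
    (ha : ∀ n, 0 ≤ a n) (hb : ∀ n, 0 ≤ b n) (hc : ∀ n, 0 ≤ c n)
    (hγ : ∀ n, 0 ≤ γ n)
    (hγδ : ∀ n, γ n * δ < 1)
    (h : ∀ N : ℕ, a N + δ * ∑ n ∈ Finset.range (N + 1), b n ≤
        δ * ∑ n ∈ Finset.range (N + 1), (γ n * a n + c n) + g₀) :
    ∀ N : ℕ, a N + δ * ∑ n ∈ Finset.range (N + 1), b n ≤
      (δ * ∑ n ∈ Finset.range (N + 1), c n + g₀) *
        Real.exp (δ * ∑ n ∈ Finset.range (N + 1), (1 - γ n * δ)⁻¹ * γ n) :=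
  discrete_gronwall_general δ g₀ hδ hg₀ a b c γ hb hc hγ hγδ h
end Gronwall
end

section
/- Let p : ℝ → ℝ be C³ and define on the interval [t^{n-1}, t^n] of length Δt, with midpoint t^{n-1/2}, the remainder R := (1/Δt)·(∫_{t^{n-1}}^{t^{n-1/2}} (t^{n-1} - s)² p'''(s) ds + ∫_{t^{n-1/2}}^{t^n} (t^n - s)² p'''(s) ds). Then R² ≤ ((Δt)³/5)·∫_{t^{n-1}}^{t^n} (p'''(s))² ds. -/
/-!
On each half of `[t^{n-1}, t^n]` the Cauchy–Schwarz inequality bounds the square of the remainder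
integral by `∫ (t - s)⁴ ds = (Δt/2)⁵/5` times the L² mass of `p'''` on that half. Adding the two
halves with `(x + y)² ≤ 2(x² + y²)` and dividing by `Δt²` gives `R² ≤ (Δt)³/80 · ∫ (p''')²`.
-/

open MeasureTheory intervalIntegral

theorem sq_integral_mul_le_integral_sq_mul_integral_sq {α : Type*} [MeasurableSpace α]
    {μ : Measure α} {f g : α → ℝ} (hf : Integrable (fun x => f x ^ 2) μ)
    (hg : Integrable (fun x => g x ^ 2) μ) (hfg : Integrable (fun x => f x * g x) μ) :
    (∫ x, f x * g x ∂μ) ^ 2 ≤ (∫ x, f x ^ 2 ∂μ) * ∫ x, g x ^ 2 ∂μ := by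
  have quadratic_nonneg : ∀ t : ℝ, 0 ≤ (∫ x, f x ^ 2 ∂μ) * (t * t)
      + (2 * ∫ x, f x * g x ∂μ) * t + ∫ x, g x ^ 2 ∂μ := by
    intro t
    have expand : ∫ x, (t * f x + g x) ^ 2 ∂μ = (∫ x, f x ^ 2 ∂μ) * (t * t)
        + (2 * ∫ x, f x * g x ∂μ) * t + ∫ x, g x ^ 2 ∂μ := by
      have hpt : ∀ x, (t * f x + g x) ^ 2 = t * t * f x ^ 2 + 2 * t * (f x * g x) + g x ^ 2 :=
        fun x => by ring
      have hlin : Integrable (fun x => t * t * f x ^ 2 + 2 * t * (f x * g x)) μ :=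
        (hf.const_mul _).add (hfg.const_mul _)
      simp only [hpt]
      rw [integral_add hlin hg, integral_add (hf.const_mul _) (hfg.const_mul _),
        MeasureTheory.integral_const_mul, MeasureTheory.integral_const_mul]
      ring
    exact expand ▸ integral_nonneg fun x => sq_nonneg _
  have hdisc := discrim_le_zero quadratic_nonneg
  rw [discrim] at hdisc
  linarith

theorem sq_intervalIntegral_mul_le {f g : ℝ → ℝ} {a b : ℝ} (hab : a ≤ b)
    (hf : Continuous f) (hg : Continuous g) :
    (∫ s in a..b, f s * g s) ^ 2 ≤ (∫ s in a..b, f s ^ 2) * ∫ s in a..b, g s ^ 2 := by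
  simp only [integral_of_le hab]
  exact sq_integral_mul_le_integral_sq_mul_integral_sq ((hf.pow 2).intervalIntegrable a b).1
    ((hg.pow 2).intervalIntegrable a b).1 ((hf.mul hg).intervalIntegrable a b).1

theorem integral_sq_sub_sq (x a b : ℝ) :
    ∫ s in a..b, ((x - s) ^ 2) ^ 2 = ((b - x) ^ 5 - (a - x) ^ 5) / 5 := by
  have hpow : ∀ s : ℝ, ((x - s) ^ 2) ^ 2 = (s - x) ^ 4 := fun s => by ring
  simp only [hpow]
  rw [integral_comp_sub_right (fun s => s ^ 4), integral_pow]
  norm_num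

theorem sq_integral_sq_sub_mul_le {g : ℝ → ℝ} (hg : Continuous g) (x : ℝ) {a b : ℝ}
    (hab : a ≤ b) :
    (∫ s in a..b, (x - s) ^ 2 * g s) ^ 2
      ≤ ((b - x) ^ 5 - (a - x) ^ 5) / 5 * ∫ s in a..b, g s ^ 2 := by
  rw [← integral_sq_sub_sq]
  exact sq_intervalIntegral_mul_le hab (by fun_prop) hg

theorem taylor_remainder_L2_estimate
    (p : ℝ → ℝ) (hp : ContDiff ℝ 3 p)
    (tnm1 tn : ℝ) (hlt : tnm1 < tn) :
    ((1 / (tn - tnm1)) *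
      ((∫ s in tnm1..((tnm1 + tn) / 2), (tnm1 - s) ^ 2 * iteratedDeriv 3 p s)
        + ∫ s in ((tnm1 + tn) / 2)..tn, (tn - s) ^ 2 * iteratedDeriv 3 p s)) ^ 2
    ≤ ((tn - tnm1) ^ 3 / 5) * ∫ s in tnm1..tn, (iteratedDeriv 3 p s) ^ 2 := by
  set m := (tnm1 + tn) / 2 with hm
  set g := iteratedDeriv 3 p
  have hg : Continuous g := hp.continuous_iteratedDeriv 3 le_rfl
  have hΔ : 0 < tn - tnm1 := sub_pos.mpr hlt
  have left_half : (∫ s in tnm1..m, (tnm1 - s) ^ 2 * g s) ^ 2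
      ≤ (tn - tnm1) ^ 5 / 160 * ∫ s in tnm1..m, g s ^ 2 := by
    convert sq_integral_sq_sub_mul_le hg tnm1 (a := tnm1) (b := m) (by linarith) using 2
    rw [hm]; ring
  have right_half : (∫ s in m..tn, (tn - s) ^ 2 * g s) ^ 2
      ≤ (tn - tnm1) ^ 5 / 160 * ∫ s in m..tn, g s ^ 2 := by
    convert sq_integral_sq_sub_mul_le hg tn (a := m) (b := tn) (by linarith) using 2
    rw [hm]; ring
  have halves : (∫ s in tnm1..m, g s ^ 2) + ∫ s in m..tn, g s ^ 2 = ∫ s in tnm1..tn, g s ^ 2 :=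
    integral_add_adjacent_intervals ((hg.pow 2).intervalIntegrable _ _)
      ((hg.pow 2).intervalIntegrable _ _)
  have hJ : 0 ≤ ∫ s in tnm1..tn, g s ^ 2 := integral_nonneg hlt.le fun s _ => sq_nonneg _
  calc ((1 / (tn - tnm1)) * ((∫ s in tnm1..m, (tnm1 - s) ^ 2 * g s)
        + ∫ s in m..tn, (tn - s) ^ 2 * g s)) ^ 2
      ≤ 2 * ((∫ s in tnm1..m, (tnm1 - s) ^ 2 * g s) ^ 2
        + (∫ s in m..tn, (tn - s) ^ 2 * g s) ^ 2) / (tn - tnm1) ^ 2 := by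
        rw [mul_pow, one_div_pow, one_div_mul_eq_div]
        gcongr
        exact add_sq_le
    _ ≤ 2 * ((tn - tnm1) ^ 5 / 160 * (∫ s in tnm1..m, g s ^ 2)
        + (tn - tnm1) ^ 5 / 160 * ∫ s in m..tn, g s ^ 2) / (tn - tnm1) ^ 2 := by
        gcongr 2 * ?_ / _
        exact add_le_add left_half right_half
    _ = (tn - tnm1) ^ 3 / 80 * ∫ s in tnm1..tn, g s ^ 2 := by
        rw [← halves]
        field_simp
        ring
    _ ≤ (tn - tnm1) ^ 3 / 5 * ∫ s in tnm1..tn, g s ^ 2 := by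
        gcongr
        norm_num
end
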